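/- In the deductive systems Sm⁼∀ (m ∈ {3,4,5}), for any formulas φ, ψ the formula (φ ≡ ψ) → □(φ ≡ ψ) is derivable; i.e., propositional identity statements are necessary. -/

import Mathlib

/-!
Replacement in the context `φ ≡ x`, with `x` fresh, derives `(φ ≡ ψ) → ((φ̂ ≡ φ) ≡ (φ̂ ≡ ψ))`
where `φ̂ = φ[ε]`: substitution always renames bound variables, so the instance of the context
is `φ̂ ≡ _` rather than `φ ≡ _`. Replacement in the context `□x` turns this into
`(φ ≡ ψ) → (□(φ̂ ≡ φ) → □(φ̂ ≡ ψ))`. Applying `[ε]` again re-chooses the bound variables it chose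
the first time, so `φ̂[ε] = φ̂`, i.e. `φ̂ =α φ`: hence `□(φ̂ ≡ φ)` is Axiom Necessitation of an
alpha axiom, and a last replacement under `□` along the alpha axiom `(φ̂ ≡ ψ) ≡ (φ ≡ ψ)` gives
`(φ ≡ ψ) → □(φ ≡ ψ)`.
-/

/-- Formulas of the language of S3⁼∀/S4⁼∀/S5⁼∀ (with constants ⊥, ⊤),
with propositional connectives, identity ≡, necessity □ and a universal
propositional quantifier. -/
inductive Fm : Type
  | var : Nat → Fm
  | bot : Fm
  | top : Fm
  | neg : Fm → Fm
  | imp : Fm → Fm → Fm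
  | conj : Fm → Fm → Fm
  | disj : Fm → Fm → Fm
  | iden : Fm → Fm → Fm
  | box : Fm → Fm
  | all : Nat → Fm → Fm
deriving DecidableEq

namespace Fm

/-- Free variables of a formula. -/
def fv : Fm → Finset Nat
  | var n => {n}
  | bot => ∅
  | top => ∅
  | neg φ => fv φ
  | imp φ ψ => fv φ ∪ fv ψ
  | conj φ ψ => fv φ ∪ fv ψ
  | disj φ ψ => fv φ ∪ fv ψ
  | iden φ ψ => fv φ ∪ fv ψ
  | box φ => fv φ
  | all x φ => fv φ \ {x}

/-- The variable forced by the substitution σ w.r.t. ∀xφ: the least variable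
greater than all free variables of the formulas σ(u), u free in ∀xφ. -/
def forced (σ : Nat → Fm) (x : Nat) (φ : Fm) : Nat :=
  (fv (all x φ)).sup (fun u => (fv (σ u)).sup (· + 1))

/-- Capture-avoiding substitution; the bound variable of a quantified formula
is renamed to the forced variable. -/
def subst (σ : Nat → Fm) : Fm → Fm
  | var n => σ n
  | bot => bot
  | top => top
  | neg φ => neg (subst σ φ)
  | imp φ ψ => imp (subst σ φ) (subst σ ψ)
  | conj φ ψ => conj (subst σ φ) (subst σ ψ)
  | disj φ ψ => disj (subst σ φ) (subst σ ψ)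
  | iden φ ψ => iden (subst σ φ) (subst σ ψ)
  | box φ => box (subst σ φ)
  | all x φ =>
      let y := forced σ x φ
      all y (subst (Function.update σ x (var y)) φ)

/-- Substitution of a single variable: φ[x := ψ]. -/
def subst1 (x : Nat) (ψ : Fm) (φ : Fm) : Fm :=
  subst (Function.update var x ψ) φ

/-- Alpha-congruence: φ =α ψ iff φ[ε] = ψ[ε], where ε is the identity
substitution (Lemma 1 of the paper). -/
def AlphaEq (φ ψ : Fm) : Prop := subst var φ = subst var ψ

/-- Boolean evaluation treating variables, constants aside, boxed, identity
and quantified formulas as atoms. -/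
def evalP (v : Fm → Bool) : Fm → Bool
  | bot => false
  | top => true
  | neg φ => !evalP v φ
  | imp φ ψ => !evalP v φ || evalP v ψ
  | conj φ ψ => evalP v φ && evalP v ψ
  | disj φ ψ => evalP v φ || evalP v ψ
  | φ => v φ

/-- Substitution-instances of propositional tautologies. -/
def Taut (φ : Fm) : Prop := ∀ v : Fm → Bool, evalP v φ = true

/-- The axiom set 𝔸𝕏 of S3⁼∀ extended by the extra schemes `E`
(E = ∅ for S3⁼∀, the 4-scheme for S4⁼∀, the 4- and 5-schemes for S5⁼∀),
closed under universal generalization of axioms. -/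
inductive Ax (E : Fm → Prop) : Fm → Prop
  | extra {φ} : E φ → Ax E φ
  | taut {φ} : Taut φ → Ax E φ
  | t (φ) : Ax E (imp (box φ) φ)
  | k (φ ψ) : Ax E (imp (box (imp φ ψ)) (imp (box φ) (box ψ)))
  | s3 (φ ψ) : Ax E (imp (box (imp φ ψ)) (box (imp (box φ) (box ψ))))
  | alpha {φ ψ} : AlphaEq φ ψ → Ax E (iden φ ψ)
  | idImp (φ ψ) : Ax E (imp (iden φ ψ) (imp φ ψ))
  | idSubst {x χ} (ψ ψ') : x ∈ fv χ →
      Ax E (imp (iden ψ ψ') (iden (subst1 x ψ χ) (subst1 x ψ' χ)))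
  | idAll {x φ ψ} : x ∈ fv φ → x ∈ fv ψ →
      Ax E (imp (all x (iden φ ψ)) (iden (all x φ) (all x ψ)))
  | inst {x φ} (ψ) : x ∈ fv φ → Ax E (imp (all x φ) (subst1 x ψ φ))
  | allK {x φ ψ} : x ∈ fv φ → x ∈ fv ψ →
      Ax E (imp (all x (imp φ ψ)) (imp (all x φ) (all x ψ)))
  | allConst {x φ ψ} : x ∉ fv φ → x ∈ fv ψ →
      Ax E (imp (all x (imp φ ψ)) (imp φ (all x ψ)))
  | cbf {x φ} : x ∈ fv φ → Ax E (imp (box (all x φ)) (all x (box φ)))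
  | barcan {x φ} : x ∈ fv φ → Ax E (imp (all x (box φ)) (box (all x φ)))
  | gen {x φ} : Ax E φ → x ∈ fv φ → Ax E (all x φ)

/-- Extra axiom schemes: none for S3⁼∀. -/
def E3 : Fm → Prop := fun _ => False

/-- Extra axiom schemes for S4⁼∀: □φ → □□φ. -/
def E4 : Fm → Prop := fun χ => ∃ φ, χ = imp (box φ) (box (box φ))

/-- Extra axiom schemes for S5⁼∀: the 4-scheme and ¬□φ → □¬□φ. -/
def E5 : Fm → Prop := fun χ =>
  E4 χ ∨ ∃ φ, χ = imp (neg (box φ)) (box (neg (box φ)))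

/-- Derivability from a premise set Φ: premises, axioms, Axiom Necessitation
(□φ only for axioms φ) and Modus Ponens. -/
inductive Deriv (E : Fm → Prop) (Φ : Set Fm) : Fm → Prop
  | prem {φ} : φ ∈ Φ → Deriv E Φ φ
  | ax {φ} : Ax E φ → Deriv E Φ φ
  | an {φ} : Ax E φ → Deriv E Φ (box φ)
  | mp {φ ψ} : Deriv E Φ (imp φ ψ) → Deriv E Φ φ → Deriv E Φ ψ

end Fm

namespace Fm

lemma lt_forced {σ : Nat → Fm} {x : Nat} {φ : Fm} {u m : Nat}
    (hu : u ∈ fv (all x φ)) (hm : m ∈ fv (σ u)) : m < forced σ x φ :=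
  Nat.lt_of_succ_le <| (Finset.le_sup (f := (· + 1)) hm).trans <|
    Finset.le_sup (f := fun u => (fv (σ u)).sup (· + 1)) hu

lemma subst_congr (φ : Fm) {σ τ : Nat → Fm} (h : ∀ u ∈ fv φ, σ u = τ u) :
    subst σ φ = subst τ φ := by
  induction φ generalizing σ τ with
  | var n => exact h n (Finset.mem_singleton_self n)
  | bot | top => rfl
  | neg φ ih | box φ ih => simp only [subst, ih h]
  | imp φ ψ ih₁ ih₂ | conj φ ψ ih₁ ih₂ | disj φ ψ ih₁ ih₂ | iden φ ψ ih₁ ih₂ =>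
      simp only [fv, Finset.mem_union] at h
      simp only [subst, ih₁ fun u hu => h u (.inl hu), ih₂ fun u hu => h u (.inr hu)]
  | all x φ ih =>
      have hforced : forced σ x φ = forced τ x φ :=
        Finset.sup_congr rfl fun u hu => by rw [h u hu]
      simp only [subst, hforced]
      refine congrArg _ (ih fun u hu => ?_)
      by_cases hux : u = x
      · simp [hux]
      · simp only [Function.update_of_ne hux]
        exact h u (by simp [fv, hu, hux])

lemma subst1_of_notMem_fv {x : Nat} {φ : Fm} (θ : Fm) (hx : x ∉ fv φ) :
    subst1 x θ φ = subst var φ :=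
  subst_congr φ fun _ hu => Function.update_of_ne (ne_of_mem_of_not_mem hu hx) _ _

lemma fv_subst (φ : Fm) (σ : Nat → Fm) :
    fv (subst σ φ) = (fv φ).biUnion fun u => fv (σ u) := by
  induction φ generalizing σ with
  | var n => simp [subst, fv]
  | bot | top => simp [subst, fv]
  | neg φ ih | box φ ih => simp only [subst, fv, ih]
  | imp φ ψ ih₁ ih₂ | conj φ ψ ih₁ ih₂ | disj φ ψ ih₁ ih₂ | iden φ ψ ih₁ ih₂ =>
      simp only [subst, fv, ih₁, ih₂, Finset.union_biUnion]
  | all x φ ih =>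
      ext m
      simp only [subst, fv, ih, Finset.mem_sdiff, Finset.mem_biUnion, Finset.mem_singleton]
      constructor
      · rintro ⟨⟨u, hu, hmu⟩, hmy⟩
        by_cases hux : u = x
        · simp [hux, fv] at hmu
          exact absurd hmu hmy
        · rw [Function.update_of_ne hux] at hmu
          exact ⟨u, ⟨hu, hux⟩, hmu⟩
      · rintro ⟨u, ⟨hu, hux⟩, hmu⟩
        have hlt := lt_forced (x := x) (φ := φ) (by simp [fv, hu, hux]) hmu
        exact ⟨⟨u, hu, by rwa [Function.update_of_ne hux]⟩, hlt.ne⟩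

lemma forced_var_subst_all (σ : Nat → Fm) (x : Nat) (φ : Fm) :
    forced var (forced σ x φ) (subst (Function.update σ x (var (forced σ x φ))) φ) =
      forced σ x φ := by
  have hfv : fv (all (forced σ x φ) (subst (Function.update σ x (var (forced σ x φ))) φ)) =
      (fv (all x φ)).biUnion fun u => fv (σ u) :=
    fv_subst (all x φ) σ
  have hsucc : (fun u => (fv (var u)).sup (· + 1)) = (· + 1) := by
    funext u; simp [fv]
  rw [forced, hfv, hsucc, Finset.sup_biUnion]
  rfl

lemma subst_var_subst {σ : Nat → Fm} (hσ : ∀ u, subst var (σ u) = σ u) (φ : Fm) :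
    subst var (subst σ φ) = subst σ φ := by
  induction φ generalizing σ with
  | var n => exact hσ n
  | bot | top => rfl
  | neg φ ih | box φ ih => simp only [subst, ih hσ]
  | imp φ ψ ih₁ ih₂ | conj φ ψ ih₁ ih₂ | disj φ ψ ih₁ ih₂ | iden φ ψ ih₁ ih₂ =>
      simp only [subst, ih₁ hσ, ih₂ hσ]
  | all x φ ih =>
      have hσ' : ∀ u, subst var (Function.update σ x (var (forced σ x φ)) u) =
          Function.update σ x (var (forced σ x φ)) u := by
        intro u
        by_cases hux : u = x
        · simp [hux, subst]
        · simp only [Function.update_of_ne hux, hσ]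
      simp only [subst, forced_var_subst_all, Function.update_eq_self, ih hσ']

lemma alphaEq_subst_var (φ : Fm) : AlphaEq (subst var φ) φ :=
  subst_var_subst (fun _ => rfl) φ

section Derivations

variable {E : Fm → Prop} {Φ : Set Fm}

lemma Deriv.imp_trans {a b c : Fm} (hab : Deriv E Φ (imp a b)) (hbc : Deriv E Φ (imp b c)) :
    Deriv E Φ (imp a c) := by
  have htaut : Taut (imp (imp a b) (imp (imp b c) (imp a c))) := by
    intro v
    simp only [evalP]
    cases evalP v a <;> cases evalP v b <;> cases evalP v c <;> rfl
  exact ((Deriv.ax (Ax.taut htaut)).mp hab).mp hbc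

lemma Deriv.imp_of_imp_imp {a b c : Fm} (h : Deriv E Φ (imp a (imp b c))) (hb : Deriv E Φ b) :
    Deriv E Φ (imp a c) := by
  have htaut : Taut (imp b (imp (imp a (imp b c)) (imp a c))) := by
    intro v
    simp only [evalP]
    cases evalP v a <;> cases evalP v b <;> cases evalP v c <;> rfl
  exact ((Deriv.ax (Ax.taut htaut)).mp hb).mp h

lemma Deriv.iden_imp_box_imp_box (a b : Fm) :
    Deriv E Φ (imp (iden a b) (imp (box a) (box b))) := by
  have hrepl := Ax.idSubst (E := E) (x := 0) (χ := box (var 0)) a b (by simp [fv])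
  simp only [subst1, subst, Function.update_self] at hrepl
  exact (Deriv.ax hrepl).imp_trans (Deriv.ax (Ax.idImp _ _))

lemma Deriv.iden_imp_iden_congr_right (θ φ ψ : Fm) :
    Deriv E Φ (imp (iden φ ψ) (iden (iden (subst var θ) φ) (iden (subst var θ) ψ))) := by
  obtain ⟨x, hx⟩ := Infinite.exists_notMem_finset (fv θ)
  have hctx (θ' : Fm) : subst1 x θ' (iden θ (var x)) = iden (subst var θ) θ' :=
    congrArg₂ iden (subst1_of_notMem_fv θ' hx) (by simp [subst])
  have hrepl := Ax.idSubst (E := E) (x := x) (χ := iden θ (var x)) φ ψ (by simp [fv])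
  rw [hctx, hctx] at hrepl
  exact Deriv.ax hrepl

lemma Deriv.iden_imp_box_iden (φ ψ : Fm) : Deriv E Φ (imp (iden φ ψ) (box (iden φ ψ))) := by
  have hcongr := Deriv.iden_imp_iden_congr_right (E := E) (Φ := Φ) φ φ ψ
  have hnec : Deriv E Φ (box (iden (subst var φ) φ)) := .an (.alpha (alphaEq_subst_var φ))
  have hbox : Deriv E Φ (imp (iden φ ψ) (box (iden (subst var φ) ψ))) :=
    (hcongr.imp_trans (iden_imp_box_imp_box _ _)).imp_of_imp_imp hnec
  have halpha : AlphaEq (iden (subst var φ) ψ) (iden φ ψ) :=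
    congrArg (iden · (subst var ψ)) (alphaEq_subst_var φ)
  exact hbox.imp_trans ((iden_imp_box_imp_box _ _).mp (.ax (.alpha halpha)))

end Derivations

end Fm

open Fm

/-- In S3⁼∀, S4⁼∀ and S5⁼∀, the formula (φ ≡ ψ) → □(φ ≡ ψ) is
derivable: propositional identity statements are necessary. -/
theorem iden_implies_box_iden :
    (∀ φ ψ : Fm, Deriv E3 ∅ (imp (iden φ ψ) (box (iden φ ψ)))) ∧
    (∀ φ ψ : Fm, Deriv E4 ∅ (imp (iden φ ψ) (box (iden φ ψ)))) ∧
    (∀ φ ψ : Fm, Deriv E5 ∅ (imp (iden φ ψ) (box (iden φ ψ)))) :=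
  ⟨Deriv.iden_imp_box_iden, Deriv.iden_imp_box_iden, Deriv.iden_imp_box_iden⟩
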